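/- (Composition of depth-2 types) Let φ be a BE formula, and let I, I' be adjacent intervals (max(I)+1 = min(I')). Let L, L', R, R' be (possibly dummy) depth-1 types such that L ·₁ type1(I) = L' and type1(I') ·₁ R' = R. Then the depth-2 φ-type of I ∪ I' with contexts (L, R') equals (L, R', T ·₁ T', B ∪ B' ∪ B★, E ∪ E' ∪ E★), where (L,R,T,B,E) is the depth-2 φ-type of I with contexts (L,R), (L',R',T',B',E') is the depth-2 φ-type of I' with contexts (L',R'), B★ = {α ∈ Depth1(φ) : L' ⊢ α}, and E★ = {α ∈ Depth1(φ) : R ⊢ α}. -/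

import Mathlib

/-!
The depth-1 type of the union of adjacent intervals is the composition of their types, and
composition of (possibly dummy) depth-1 types is associative. A proper prefix of `I ∪ I'` is
a proper prefix of `I`, `I` itself, or `I ∪ K` with `K` a proper prefix of `I'`; in the last
case `L ·₁ type1(I ∪ K) = (L ·₁ type1(I)) ·₁ type1(K) = L' ·₁ type1(K)`, so the three cases give
`B`, `B★` and `B'`. Suffixes are symmetric.
-/

/-- An interval `[lo, hi]` over the natural numbers. -/
structure Itv where
  lo : ℕ
  hi : ℕ
  le : lo ≤ hi

/-- The singleton interval `[x, x]`. -/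
def Itv.sing (x : ℕ) : Itv := ⟨x, x, le_rfl⟩

/-- `J` is a proper prefix of `I`. -/
def isPrefix (J I : Itv) : Prop := J.lo = I.lo ∧ J.hi < I.hi

/-- `J` is a proper suffix of `I`. -/
def isSuffix (J I : Itv) : Prop := J.hi = I.hi ∧ I.lo < J.lo

/-- BE formulas in homogeneous normal form: atoms are `π` and `π ∧ p`. -/
inductive BEpi (Sig : Type) : Type
  | pi : BEpi Sig
  | atomPi : Sig → BEpi Sig
  | neg : BEpi Sig → BEpi Sig
  | or : BEpi Sig → BEpi Sig → BEpi Sig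
  | diaB : BEpi Sig → BEpi Sig
  | diaE : BEpi Sig → BEpi Sig

/-- Satisfaction of a formula in homogeneous normal form at an interval. -/
def satp {Sig : Type} (σ : Itv → Set Sig) : Itv → BEpi Sig → Prop
  | I, .pi => I.lo = I.hi
  | I, .atomPi p => I.lo = I.hi ∧ p ∈ σ I
  | I, .neg φ => ¬ satp σ I φ
  | I, .or φ ψ => satp σ I φ ∨ satp σ I ψ
  | I, .diaB φ => ∃ J, isPrefix J I ∧ satp σ J φ
  | I, .diaE φ => ∃ J, isSuffix J I ∧ satp σ J φ

/-- Modal depth of a formula (not counting the `π` abbreviation). -/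
def dep {Sig : Type} : BEpi Sig → ℕ
  | .pi => 0
  | .atomPi _ => 0
  | .neg φ => dep φ
  | .or φ ψ => max (dep φ) (dep ψ)
  | .diaB φ => dep φ + 1
  | .diaE φ => dep φ + 1

/-- The set of subformulas of a formula. -/
def subf {Sig : Type} : BEpi Sig → Set (BEpi Sig)
  | .pi => {.pi}
  | .atomPi p => {.atomPi p}
  | .neg φ => insert (.neg φ) (subf φ)
  | .or φ ψ => insert (.or φ ψ) (subf φ ∪ subf ψ)
  | .diaB φ => insert (.diaB φ) (subf φ)
  | .diaE φ => insert (.diaE φ) (subf φ)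

/-- Subformulas of `φ` of depth at most 1. -/
def Depth1 {Sig : Type} (φ : BEpi Sig) : Set (BEpi Sig) :=
  {α | α ∈ subf φ ∧ dep α ≤ 1}

/-- Length component of a depth-1 type: one point, two points, or more. -/
inductive Len : Type
  | one | two | more
deriving DecidableEq

/-- A depth-1 type: length component, depth-0 type of the interval, and
depth-0 types of its two endpoint singletons. A depth-0 type is `some s`
(the labels, standing for `{π} ∪ s`) for singletons and `none` (∅) otherwise. -/
structure T1 (Sig : Type) where
  len : Len
  t : Option (Set Sig)
  b : Option (Set Sig)
  e : Option (Set Sig)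

/-- The depth-0 type of an interval. -/
def type0 {Sig : Type} (σ : Itv → Set Sig) (I : Itv) : Option (Set Sig) :=
  if I.lo = I.hi then some (σ I) else none

/-- The depth-1 type of an interval. -/
def type1 {Sig : Type} (σ : Itv → Set Sig) (I : Itv) : T1 Sig :=
  ⟨if I.lo = I.hi then .one else if I.hi = I.lo + 1 then .two else .more,
   type0 σ I, type0 σ (Itv.sing I.lo), type0 σ (Itv.sing I.hi)⟩

/-- Composition of length components. -/
def Len.comp : Len → Len → Len
  | .one, .one => .two
  | _, _ => .more

/-- Composition of depth-1 types. -/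
def T1.comp {Sig : Type} (a b : T1 Sig) : T1 Sig :=
  ⟨a.len.comp b.len, none, a.b, b.e⟩

/-- Depth-1 types extended with the dummy type `none`, and their composition. -/
def ocomp {Sig : Type} : Option (T1 Sig) → Option (T1 Sig) → Option (T1 Sig)
  | none, x => x
  | x, none => x
  | some a, some b => some (a.comp b)

/-- Truth of a depth-0 formula determined by a depth-0 type. -/
def ent0 {Sig : Type} : Option (Set Sig) → BEpi Sig → Prop
  | t, .pi => t.isSome
  | t, .atomPi p => ∃ s, t = some s ∧ p ∈ s
  | t, .neg φ => ¬ ent0 t φ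
  | t, .or φ ψ => ent0 t φ ∨ ent0 t ψ
  | _, .diaB _ => False
  | _, .diaE _ => False

/-- Truth of a depth-(≤1) formula determined by a depth-1 type (`T ⊢ α`). -/
def ent {Sig : Type} (T : T1 Sig) : BEpi Sig → Prop
  | .pi => ent0 T.t .pi
  | .atomPi p => ent0 T.t (.atomPi p)
  | .neg φ => ¬ ent T φ
  | .or φ ψ => ent T φ ∨ ent T ψ
  | .diaB α => match T.len with
      | .one => False
      | .two => ent0 T.b α
      | .more => ent0 T.b α ∨ ent0 none α
  | .diaE α => match T.len with
      | .one => False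
      | .two => ent0 T.e α
      | .more => ent0 T.e α ∨ ent0 none α

/-- `⊢` lifted to possibly-dummy depth-1 types (the dummy entails nothing). -/
def entails {Sig : Type} (o : Option (T1 Sig)) (α : BEpi Sig) : Prop :=
  ∃ T, o = some T ∧ ent T α

/-- A depth-2 `φ`-type with left and right contexts. -/
structure T2 (Sig : Type) where
  L : Option (T1 Sig)
  R : Option (T1 Sig)
  T : T1 Sig
  B : Set (BEpi Sig)
  E : Set (BEpi Sig)

/-- The depth-2 `φ`-type of an interval `I` with contexts `L`, `R`. -/
def type2 {Sig : Type} (σ : Itv → Set Sig) (φ : BEpi Sig)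
    (L R : Option (T1 Sig)) (I : Itv) : T2 Sig :=
  ⟨L, R, type1 σ I,
   {α | α ∈ Depth1 φ ∧ ∃ J, isPrefix J I ∧ entails (ocomp L (some (type1 σ J))) α},
   {α | α ∈ Depth1 φ ∧ ∃ J, isSuffix J I ∧ entails (ocomp (some (type1 σ J)) R) α}⟩

attribute [ext] Itv

@[simps]
def Itv.append (I I' : Itv) (h : I.hi + 1 = I'.lo) : Itv :=
  ⟨I.lo, I'.hi, I.le.trans (Nat.le_of_succ_le (h.trans_le I'.le))⟩

theorem Len.comp_assoc (x y z : Len) : (x.comp y).comp z = x.comp (y.comp z) := by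
  cases x <;> cases y <;> cases z <;> rfl

theorem T1.comp_assoc {Sig : Type} (a b c : T1 Sig) :
    (a.comp b).comp c = a.comp (b.comp c) := by
  simp only [T1.comp, Len.comp_assoc]

theorem ocomp_some_comp {Sig : Type} (x : Option (T1 Sig)) (a b : T1 Sig) :
    ocomp x (some (a.comp b)) = ocomp (ocomp x (some a)) (some b) := by
  cases x <;> simp only [ocomp, T1.comp_assoc]

theorem ocomp_comp_some {Sig : Type} (y : Option (T1 Sig)) (a b : T1 Sig) :
    ocomp (some (a.comp b)) y = ocomp (some a) (ocomp (some b) y) := by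
  cases y <;> simp only [ocomp, T1.comp_assoc]

theorem type1_append {Sig : Type} (σ : Itv → Set Sig) (I I' : Itv) (h : I.hi + 1 = I'.lo) :
    type1 σ (I.append I' h) = (type1 σ I).comp (type1 σ I') := by
  have := I.le
  have := I'.le
  simp only [type1, type0, Itv.append_lo, Itv.append_hi, T1.comp]
  congr 1 <;> split_ifs <;> first | rfl | omega

theorem exists_isPrefix_append_iff (I I' : Itv) (h : I.hi + 1 = I'.lo) (P : Itv → Prop) :
    (∃ J, isPrefix J (I.append I' h) ∧ P J) ↔
      (∃ J, isPrefix J I ∧ P J) ∨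
        (∃ K, ∃ hK : isPrefix K I', P (I.append K (h.trans hK.1.symm))) ∨ P I := by
  have := I'.le
  constructor
  · rintro ⟨J, ⟨hlo, hhi : J.hi < I'.hi⟩, hJ⟩
    rcases lt_trichotomy J.hi I.hi with hlt | heq | hgt
    · exact Or.inl ⟨J, ⟨hlo, hlt⟩, hJ⟩
    · obtain rfl : J = I := Itv.ext hlo heq
      exact Or.inr (Or.inr hJ)
    · let K : Itv := ⟨I'.lo, J.hi, by omega⟩
      have hK : isPrefix K I' := ⟨rfl, hhi⟩
      have hJK : I.append K (h.trans hK.1.symm) = J := Itv.ext hlo.symm rfl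
      exact Or.inr (Or.inl ⟨K, hK, hJK ▸ hJ⟩)
  · rintro (⟨J, ⟨hlo, hhi⟩, hJ⟩ | ⟨K, hK, hIK⟩ | hI)
    · exact ⟨J, ⟨hlo, show J.hi < I'.hi by omega⟩, hJ⟩
    · exact ⟨I.append K _, ⟨rfl, hK.2⟩, hIK⟩
    · exact ⟨I, ⟨rfl, show I.hi < I'.hi by omega⟩, hI⟩

theorem exists_isSuffix_append_iff (I I' : Itv) (h : I.hi + 1 = I'.lo) (P : Itv → Prop) :
    (∃ J, isSuffix J (I.append I' h) ∧ P J) ↔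
      (∃ K, ∃ hK : isSuffix K I, P (K.append I' (hK.1 ▸ h))) ∨
        (∃ J, isSuffix J I' ∧ P J) ∨ P I' := by
  have := I.le
  constructor
  · rintro ⟨J, ⟨hhi, hlo : I.lo < J.lo⟩, hJ⟩
    rcases lt_trichotomy J.lo I'.lo with hlt | heq | hgt
    · let K : Itv := ⟨J.lo, I.hi, by omega⟩
      have hK : isSuffix K I := ⟨rfl, hlo⟩
      have hKJ : K.append I' (hK.1 ▸ h) = J := Itv.ext rfl hhi.symm
      exact Or.inl ⟨K, hK, hKJ ▸ hJ⟩
    · obtain rfl : J = I' := Itv.ext heq hhi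
      exact Or.inr (Or.inr hJ)
    · exact Or.inr (Or.inl ⟨J, ⟨hhi, hgt⟩, hJ⟩)
  · rintro (⟨K, hK, hKI'⟩ | ⟨J, ⟨hhi, hlo⟩, hJ⟩ | hI')
    · exact ⟨K.append I' _, ⟨rfl, hK.2⟩, hKI'⟩
    · exact ⟨J, ⟨hhi, show I.lo < J.lo by omega⟩, hJ⟩
    · exact ⟨I', ⟨rfl, show I.lo < I'.lo by omega⟩, hI'⟩

/-- Composition of depth-2 types: for adjacent intervals `I`, `I'` and
compatible contexts, the depth-2 `φ`-type of `I ∪ I'` with contexts `(L, R')`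
is obtained from the types of `I` and `I'` by composing the depth-1 type
components and taking unions of the `B`/`E` components together with the sets
`B★`, `E★` of depth-≤1 subformulas entailed by `L'` and `R` respectively. -/
theorem depth2_composition {Sig : Type} (σ : Itv → Set Sig) (φ : BEpi Sig)
    (I I' : Itv) (hadj : I.hi + 1 = I'.lo)
    (L L' R R' : Option (T1 Sig))
    (hL : ocomp L (some (type1 σ I)) = L')
    (hR : ocomp (some (type1 σ I')) R' = R) :
    type2 σ φ L R' ⟨I.lo, I'.hi, le_trans I.le (le_trans (by omega) I'.le)⟩ =
      ⟨L, R', (type1 σ I).comp (type1 σ I'),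
       (type2 σ φ L R I).B ∪ (type2 σ φ L' R' I').B ∪
         {α | α ∈ Depth1 φ ∧ entails L' α},
       (type2 σ φ L R I).E ∪ (type2 σ φ L' R' I').E ∪
         {α | α ∈ Depth1 φ ∧ entails R α}⟩ := by
  subst hL hR
  change type2 σ φ L R' (I.append I' hadj) = _
  simp only [type2, T2.mk.injEq, type1_append, true_and]
  constructor
  · ext α
    simp only [Set.mem_union, Set.mem_ofPred_eq, exists_isPrefix_append_iff, type1_append,
      ocomp_some_comp, exists_prop, and_or_left, or_assoc]
  · ext α
    simp only [Set.mem_union, Set.mem_ofPred_eq, exists_isSuffix_append_iff, type1_append,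
      ocomp_comp_some, exists_prop, and_or_left, or_assoc]
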